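/- Assume Conditions (C) and (E). Then for every proper SαS random element ξ in K with characteristic exponent α, one has α > 0 if and only if the neutral element coincides with the origin, e = 0. -/

import Mathlib

open Filter Topology MeasureTheory

/-- A character on the semigroup `K` with involution `inv`: a map into the closed unit
disk of `ℂ` with `χ e = 1` (Lean's `0 : K` is the neutral element `e`), multiplicative,
and intertwining the involution with complex conjugation. -/
def IsChar {K : Type*} [AddCommMonoid K] (inv : K → K) (χ : K → ℂ) : Prop :=
  (∀ x : K, ‖χ x‖ ≤ 1) ∧ χ 0 = 1 ∧
    (∀ x y : K, χ (x + y) = χ x * χ y) ∧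
    ∀ x : K, χ (inv x) = (starRingEnd ℂ) (χ x)

/-- A semicontinuous `[0,1]`-valued character (the modulus part in Condition (C)). -/
def IsModChar {K : Type*} [TopologicalSpace K] [AddCommMonoid K] (inv : K → K)
    (χ' : K → ℝ) : Prop :=
  (∀ x : K, χ' x ∈ Set.Icc (0 : ℝ) 1) ∧ χ' 0 = 1 ∧
    (∀ x y : K, χ' (x + y) = χ' x * χ' y) ∧ (∀ x : K, χ' (inv x) = χ' x) ∧
    (LowerSemicontinuous χ' ∨ UpperSemicontinuous χ')

/-- A continuous character with values in the unit circle (the argument part in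
Condition (C)). -/
def IsArgChar {K : Type*} [TopologicalSpace K] [AddCommMonoid K] (inv : K → K)
    (χ'' : K → ℂ) : Prop :=
  (∀ x : K, ‖χ'' x‖ = 1) ∧ χ'' 0 = 1 ∧
    (∀ x y : K, χ'' (x + y) = χ'' x * χ'' y) ∧
    (∀ x : K, χ'' (inv x) = (starRingEnd ℂ) (χ'' x)) ∧ Continuous χ''

/-- Condition (C): `Kt` is a cone of characters (containing `1`, closed under pointwise
multiplication and under the rescalings `χ ↦ χ (a • ·)`, `a > 0`) such that every
`χ ∈ Kt` factorises as the product of a semicontinuous `[0,1]`-valued character and a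
continuous unit-circle-valued character, and `Kt` possesses a countable strictly
separating sub-family. -/
def ConditionC {K : Type*} [TopologicalSpace K] [AddCommMonoid K] [SMul ℝ K]
    (inv : K → K) (Kt : Set (K → ℂ)) : Prop :=
  (∀ χ ∈ Kt, IsChar inv χ) ∧
  ((fun _ : K => (1 : ℂ)) ∈ Kt) ∧
  (∀ χ₁ ∈ Kt, ∀ χ₂ ∈ Kt, (fun x => χ₁ x * χ₂ x) ∈ Kt) ∧
  (∀ a : ℝ, 0 < a → ∀ χ ∈ Kt, (fun x : K => χ (a • x)) ∈ Kt) ∧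
  (∀ χ ∈ Kt, ∃ (χ' : K → ℝ) (χ'' : K → ℂ), IsModChar inv χ' ∧ IsArgChar inv χ'' ∧
    ∀ x : K, χ x = (χ' x : ℂ) * χ'' x) ∧
  (∃ C : Set (K → ℂ), C ⊆ Kt ∧ C.Countable ∧ ∀ x y : K, x ≠ y →
    ∃ χ ∈ C, ∃ U ∈ 𝓝 x, ∃ V ∈ 𝓝 y, ∀ x' ∈ U, ∀ y' ∈ V, χ x' ≠ χ y')

open scoped Classical in
/-- Condition (E): `K` is pointed with origin `o` and, for every character `χ ∈ Kt` and
every `x ∈ E = K ∖ {o, e}`, `χ (s • x) → 1`, where `s ↓ 0` if `e = o` and `s → ∞`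
otherwise (Lean's `0 : K` is the neutral element `e`). -/
def ConditionE {K : Type*} [TopologicalSpace K] [AddCommMonoid K] [SMul ℝ K]
    (o : K) (Kt : Set (K → ℂ)) : Prop :=
  ∀ χ ∈ Kt, ∀ x : K, x ≠ o → x ≠ 0 →
    Filter.Tendsto (fun s : ℝ => χ (s • x))
      (if o = (0 : K) then nhdsWithin 0 (Set.Ioi 0) else Filter.atTop) (nhds 1)

/-!
Stability gives `∫ χ (n^{1/α} • x) dν = φ(χ)^n` for the law `ν` of `ξ` and `φ(χ) = ∫ χ dν`.
As `n → ∞`, `n^{1/α}` tends to `0` (`α < 0`) or to `∞` (`α > 0`), Condition (E) identifies the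
pointwise limit `g` of `χ(n^{1/α} • x)`, and dominated convergence yields `∫ g dν = φ(χ) ∫ g dν`.

If `e = o` and `α < 0`, then `g ≡ 1`, so `φ ≡ 1` and the countable separating family forces
`ξ = e` almost surely. If `e ≠ o` and `α > 0`, then `g` is `χ(o)` at `o` and `1` elsewhere, so
`∫ g dν = 1 + p (χ(o) - 1)` with `p = P(ξ = o)`. Either `p = 0` and again `φ ≡ 1`, or a character
`χ` separating `e` from `o` has `∫ g dν = 0`, and then `φ(χ) = ∫ g dν = 0` contradicts properness:
if `o + o = o` then `χ(o) ∈ {0, 1}` forces `p = 1`; otherwise every element is `2`-torsion, so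
`χ` is `±1`-valued and continuous along rays, hence `χ = 1` off `{e, o}`.
-/

open Set

theorem eq_mul_of_tendsto_pow {M : Type*} [Monoid M] [TopologicalSpace M] [ContinuousMul M]
    [T2Space M] {z L : M} (h : Tendsto (fun n : ℕ => z ^ n) atTop (𝓝 L)) : L = z * L := by
  refine tendsto_nhds_unique ((tendsto_add_atTop_iff_nat 1).2 h) ?_
  simpa only [pow_succ'] using h.const_mul z

theorem ae_eq_one_of_integral_eq_one {Ω : Type*} [MeasurableSpace Ω] {μ : Measure Ω}
    [IsProbabilityMeasure μ] {f : Ω → ℂ} (hf : AEStronglyMeasurable f μ) (hle : ∀ ω, ‖f ω‖ ≤ 1)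
    (h : ∫ ω, f ω ∂μ = 1) : ∀ᵐ ω ∂μ, f ω = 1 := by
  have hint : Integrable f μ := .of_bound hf 1 (Eventually.of_forall hle)
  have hint_re : Integrable (fun ω => (f ω).re) μ := hint.re
  have hre : ∫ ω, (1 - (f ω).re) ∂μ = 0 := by
    have h_re : ∫ ω, (f ω).re ∂μ = (∫ ω, f ω ∂μ).re := integral_re hint
    rw [integral_sub (integrable_const 1) hint_re, h_re, h]
    simp
  have hre_nonneg : 0 ≤ fun ω => 1 - (f ω).re := fun ω =>
    sub_nonneg.2 ((Complex.re_le_norm _).trans (hle ω))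
  filter_upwards [(integral_eq_zero_iff_of_nonneg hre_nonneg
    ((integrable_const 1).sub hint_re)).1 hre] with ω hω
  have hre1 : (f ω).re = 1 := by linarith [show 1 - (f ω).re = 0 from hω]
  have him : (f ω).im = 0 := Complex.abs_re_eq_norm.1 <|
    le_antisymm (Complex.abs_re_le_norm _) (by rw [hre1, abs_one]; exact hle ω)
  exact Complex.ext hre1 him

theorem tendsto_natCast_rpow_nhdsGT_zero {y : ℝ} (hy : y < 0) :
    Tendsto (fun n : ℕ => (n : ℝ) ^ y) atTop (𝓝[>] 0) := by
  refine tendsto_nhdsWithin_iff.2 ⟨?_, ?_⟩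
  · have h := (tendsto_rpow_neg_atTop (neg_pos.2 hy)).comp tendsto_natCast_atTop_atTop
    rwa [neg_neg] at h
  · filter_upwards [eventually_gt_atTop 0] with n hn
    exact Real.rpow_pos_of_pos (Nat.cast_pos.2 hn) _

theorem integral_ite_eq_one_add {X : Type*} [MeasurableSpace X] [MeasurableSingletonClass X]
    {ν : Measure X} [IsProbabilityMeasure ν] [DecidableEq X] (o : X) (c : ℂ) :
    ∫ x, (if x = o then c else 1) ∂ν = 1 + ν.real {o} * (c - 1) := by
  have hsplit : (fun x => if x = o then c else 1) =
      fun x => 1 + ({o} : Set X).indicator (fun _ => c - 1) x := by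
    funext x
    by_cases hx : x = o <;> simp [hx]
  rw [hsplit, integral_add (integrable_const 1)
    ((integrable_const _).indicator (measurableSet_singleton o)),
    integral_indicator_const _ (measurableSet_singleton o)]
  simp [Complex.real_smul]

structure IsCone (K : Type*) [TopologicalSpace K] [AddCommMonoid K] [SMul ℝ K] : Prop where
  continuousOn_smul : ContinuousOn (fun p : ℝ × K => p.1 • p.2) (Ioi 0 ×ˢ univ)
  smul_add : ∀ a : ℝ, 0 < a → ∀ x y : K, a • (x + y) = a • x + a • y
  smul_smul : ∀ a b : ℝ, 0 < a → 0 < b → ∀ x : K, a • (b • x) = (a * b) • x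
  one_smul : ∀ x : K, (1 : ℝ) • x = x
  smul_zero : ∀ a : ℝ, 0 < a → a • (0 : K) = 0

section Cone

variable {K : Type*} [TopologicalSpace K] [AddCommMonoid K] [SMul ℝ K]

def IsOrigin (o : K) : Prop :=
  ∀ x : K, x ≠ 0 → Tendsto (fun a : ℝ => a • x) (𝓝[>] 0) (𝓝 o)

theorem IsCone.continuous_const_smul (hK : IsCone K) {a : ℝ} (ha : 0 < a) :
    Continuous fun x : K => a • x :=
  hK.continuousOn_smul.comp_continuous (continuous_const.prodMk continuous_id)
    fun _ => ⟨ha, trivial⟩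

theorem IsCone.continuousOn_smul_const (hK : IsCone K) (x : K) :
    ContinuousOn (fun t : ℝ => t • x) (Ioi 0) :=
  hK.continuousOn_smul.comp (continuous_id.prodMk continuous_const).continuousOn
    fun _ ht => ⟨ht, trivial⟩

theorem IsCone.smul_origin [T2Space K] (hK : IsCone K) {o x : K} (ho : IsOrigin o) (hx : x ≠ 0)
    {a : ℝ} (ha : 0 < a) : a • o = o := by
  have hmul : Tendsto (a * ·) (𝓝[>] (0 : ℝ)) (𝓝[>] 0) :=
    tendsto_iff_comap.2 (comap_mulLeft_nhdsGT_zero ha).ge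
  refine tendsto_nhds_unique ?_ ((ho x hx).comp hmul)
  refine (((hK.continuous_const_smul ha).tendsto o).comp (ho x hx)).congr' ?_
  filter_upwards [self_mem_nhdsWithin] with b hb using hK.smul_smul a b ha hb x

theorem IsCone.origin_add_self [T2Space K] [ContinuousAdd K] (hK : IsCone K) {o x : K}
    (ho : IsOrigin o) (hx : x ≠ 0) (hxx : x + x ≠ 0) : o + o = o := by
  refine tendsto_nhds_unique (((ho x hx).add (ho x hx)).congr' ?_) (ho _ hxx)
  filter_upwards [self_mem_nhdsWithin] with b hb using (hK.smul_add b hb x x).symm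

end Cone

section Characters

variable {K : Type*} [TopologicalSpace K] [AddCommMonoid K] {inv : K → K}

theorem IsModChar.eq_one_of_add_self_eq_zero {χ' : K → ℝ} (h : IsModChar inv χ') {x : K}
    (hx : x + x = 0) : χ' x = 1 := by
  obtain ⟨hmem, h0, hadd, -⟩ := h
  have hsq : χ' x * χ' x = 1 := by rw [← hadd, hx, h0]
  exact (mul_self_eq_one_iff.1 hsq).resolve_right (by linarith [(hmem x).1])

variable [SMul ℝ K] {Kt : Set (K → ℂ)} {χ : K → ℂ}

theorem ConditionC.measurable [MeasurableSpace K] [OpensMeasurableSpace K]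
    (hC : ConditionC inv Kt) (hχ : χ ∈ Kt) : Measurable χ := by
  obtain ⟨χ', χ'', hmod, harg, hfac⟩ := hC.2.2.2.2.1 χ hχ
  have hχ' : Measurable χ' :=
    hmod.2.2.2.2.elim LowerSemicontinuous.measurable UpperSemicontinuous.measurable
  rw [funext hfac]
  exact (Complex.measurable_ofReal.comp hχ').mul harg.2.2.2.2.measurable

theorem ConditionC.exists_countable_ne_one (hC : ConditionC inv Kt) :
    ∃ C ⊆ Kt, C.Countable ∧ ∀ x : K, x ≠ 0 → ∃ χ ∈ C, χ x ≠ 1 := by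
  obtain ⟨hchar, -, -, -, -, C, hCK, hCc, hsep⟩ := hC
  refine ⟨C, hCK, hCc, fun x hx => ?_⟩
  obtain ⟨χ, hχ, U, hU, V, hV, hne⟩ := hsep x 0 hx
  exact ⟨χ, hχ, (hchar χ (hCK hχ)).2.1 ▸ hne x (mem_of_mem_nhds hU) 0 (mem_of_mem_nhds hV)⟩

theorem ConditionC.ae_eq_zero_of_integral_eq_one [MeasurableSpace K] [OpensMeasurableSpace K]
    (hC : ConditionC inv Kt) {ν : Measure K} [IsProbabilityMeasure ν]
    (h : ∀ χ ∈ Kt, ∫ x, χ x ∂ν = 1) : ∀ᵐ x ∂ν, x = 0 := by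
  obtain ⟨C, hCK, hCc, hsep⟩ := hC.exists_countable_ne_one
  have hae : ∀ᵐ x ∂ν, ∀ χ ∈ C, χ x = 1 := (ae_ball_iff hCc).2 fun χ hχ =>
    ae_eq_one_of_integral_eq_one (hC.measurable (hCK hχ)).aestronglyMeasurable
      (hC.1 χ (hCK hχ)).1 (h χ (hCK hχ))
  filter_upwards [hae] with x hx
  by_contra hx0
  obtain ⟨χ, hχ, hne⟩ := hsep x hx0
  exact hne (hx χ hχ)

theorem ConditionE.tendsto_nhdsGT_zero (hE : ConditionE (0 : K) Kt) (hK : IsCone K)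
    (hχ : χ ∈ Kt) (hχ0 : χ 0 = 1) (x : K) :
    Tendsto (fun t : ℝ => χ (t • x)) (𝓝[>] 0) (𝓝 1) := by
  by_cases hx0 : x = 0
  · refine tendsto_const_nhds.congr' ?_
    filter_upwards [self_mem_nhdsWithin] with t ht
    rw [hx0, hK.smul_zero t ht, hχ0]
  · simpa using hE χ hχ x hx0 hx0

open scoped Classical in
theorem ConditionE.tendsto_atTop [T2Space K] {o : K} (hE : ConditionE o Kt) (hK : IsCone K)
    (ho : IsOrigin o) (ho0 : o ≠ 0) (hχ : χ ∈ Kt) (hχ0 : χ 0 = 1) (x : K) :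
    Tendsto (fun t : ℝ => χ (t • x)) atTop (𝓝 (if x = o then χ o else 1)) := by
  by_cases hxo : x = o
  · rw [if_pos hxo]
    refine tendsto_const_nhds.congr' ?_
    filter_upwards [eventually_gt_atTop 0] with t ht
    rw [hxo, hK.smul_origin ho ho0 ht]
  rw [if_neg hxo]
  by_cases hx0 : x = 0
  · refine tendsto_const_nhds.congr' ?_
    filter_upwards [eventually_gt_atTop 0] with t ht
    rw [hx0, hK.smul_zero t ht, hχ0]
  · simpa [ho0] using hE χ hχ x hxo hx0

theorem ConditionC.eq_one_of_forall_add_self_eq_zero (hC : ConditionC inv Kt) (hK : IsCone K)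
    {o : K} (hE : ConditionE o Kt) (ho0 : o ≠ 0) (h2 : ∀ y : K, y + y = 0) (hχ : χ ∈ Kt)
    {x : K} (hx0 : x ≠ 0) (hxo : x ≠ o) : χ x = 1 := by
  obtain ⟨-, h0, hadd, -⟩ := hC.1 χ hχ
  obtain ⟨χ', χ'', hmod, harg, hfac⟩ := hC.2.2.2.2.1 χ hχ
  have hχ_eq : χ = χ'' := funext fun y => by
    rw [hfac, hmod.eq_one_of_add_self_eq_zero (h2 y), Complex.ofReal_one, one_mul]
  have hcont : ContinuousOn (fun t : ℝ => χ (t • x)) (Ioi 0) := by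
    rw [hχ_eq]
    exact harg.2.2.2.2.comp_continuousOn (hK.continuousOn_smul_const x)
  have hsq : EqOn ((fun t : ℝ => χ (t • x)) ^ 2) 1 (Ioi 0) := fun t _ => by
    simp only [Pi.pow_apply, Pi.one_apply, sq, ← hadd, h2, h0]
  have hlim : Tendsto (fun t : ℝ => χ (t • x)) atTop (𝓝 1) := by
    simpa [ho0] using hE χ hχ x hxo hx0
  rcases isPreconnected_Ioi.eq_one_or_eq_neg_one_of_sq_eq hcont hsq with h | h
  · simpa [hK.one_smul] using h (mem_Ioi.2 one_pos)
  · have hneg : Tendsto (fun t : ℝ => χ (t • x)) atTop (𝓝 (-1)) :=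
      tendsto_const_nhds.congr' <| (eventually_gt_atTop 0).mono fun t ht => (h ht).symm
    exact absurd (tendsto_nhds_unique hlim hneg) (by norm_num)

end Characters

section Stable

def IsStrictlyStable {K : Type*} [AddCommMonoid K] [SMul ℝ K] [MeasurableSpace K]
    (ν : Measure K) (α : ℝ) : Prop :=
  ∀ a b : ℝ, 0 < a → 0 < b →
    (ν.prod ν).map (fun p : K × K => a ^ (1 / α) • p.1 + b ^ (1 / α) • p.2) =
      ν.map (fun x : K => (a + b) ^ (1 / α) • x)

variable {K : Type*} [TopologicalSpace K] [AddCommMonoid K] [SMul ℝ K] [MeasurableSpace K]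
  [BorelSpace K] {ν : Measure K} {α : ℝ} {χ : K → ℂ}

theorem IsStrictlyStable.integral_comp_rpow_smul_add [MeasurableAdd₂ K] [SFinite ν]
    (hν : IsStrictlyStable ν α) (hK : IsCone K) (hχm : Measurable χ)
    (hχ : ∀ x y, χ (x + y) = χ x * χ y) {a b : ℝ} (ha : 0 < a) (hb : 0 < b) :
    ∫ x, χ ((a + b) ^ (1 / α) • x) ∂ν =
      (∫ x, χ (a ^ (1 / α) • x) ∂ν) * ∫ x, χ (b ^ (1 / α) • x) ∂ν := by
  have hscale : ∀ {c : ℝ}, 0 < c → Measurable fun x : K => c ^ (1 / α) • x := fun hc =>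
    (hK.continuous_const_smul (Real.rpow_pos_of_pos hc _)).measurable
  have hsum : Measurable fun p : K × K => a ^ (1 / α) • p.1 + b ^ (1 / α) • p.2 :=
    ((hscale ha).comp measurable_fst).add ((hscale hb).comp measurable_snd)
  calc ∫ x, χ ((a + b) ^ (1 / α) • x) ∂ν
      = ∫ y, χ y ∂(ν.map fun x : K => (a + b) ^ (1 / α) • x) :=
        (integral_map (hscale (add_pos ha hb)).aemeasurable hχm.aestronglyMeasurable).symm
    _ = ∫ p, χ (a ^ (1 / α) • p.1 + b ^ (1 / α) • p.2) ∂(ν.prod ν) := by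
        rw [← hν a b ha hb, integral_map hsum.aemeasurable hχm.aestronglyMeasurable]
    _ = _ := by
        simp only [hχ]
        exact integral_prod_mul (fun x => χ (a ^ (1 / α) • x)) (fun y => χ (b ^ (1 / α) • y))

theorem IsStrictlyStable.integral_comp_natCast_rpow_smul [MeasurableAdd₂ K] [SFinite ν]
    (hν : IsStrictlyStable ν α) (hK : IsCone K) (hχm : Measurable χ)
    (hχ : ∀ x y, χ (x + y) = χ x * χ y) {n : ℕ} (hn : n ≠ 0) :
    ∫ x, χ ((n : ℝ) ^ (1 / α) • x) ∂ν = (∫ x, χ x ∂ν) ^ n := by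
  have hone : ∫ x, χ ((1 : ℝ) ^ (1 / α) • x) ∂ν = ∫ x, χ x ∂ν := by
    simp only [Real.one_rpow, hK.one_smul]
  induction n, Nat.one_le_iff_ne_zero.2 hn using Nat.le_induction with
  | base => simpa using hone
  | succ n hn ih =>
    rw [Nat.cast_succ, hν.integral_comp_rpow_smul_add hK hχm hχ (by positivity) one_pos,
      ih (by omega), hone, pow_succ]

theorem IsStrictlyStable.integral_eq_integral_mul_of_tendsto [MeasurableAdd₂ K]
    [IsProbabilityMeasure ν] (hν : IsStrictlyStable ν α) (hK : IsCone K) (hχm : Measurable χ)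
    (hle : ∀ x, ‖χ x‖ ≤ 1) (hχ : ∀ x y, χ (x + y) = χ x * χ y) {l : Filter ℝ}
    (hl : Tendsto (fun n : ℕ => (n : ℝ) ^ (1 / α)) atTop l) {f : K → ℂ}
    (hf : ∀ x, Tendsto (fun t => χ (t • x)) l (𝓝 (f x))) :
    ∫ x, f x ∂ν = (∫ x, χ x ∂ν) * ∫ x, f x ∂ν := by
  refine eq_mul_of_tendsto_pow ?_
  have hpos : ∀ᶠ n : ℕ in atTop, 0 < (n : ℝ) ^ (1 / α) := by
    filter_upwards [eventually_gt_atTop 0] with n hn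
    exact Real.rpow_pos_of_pos (Nat.cast_pos.2 hn) _
  have hdom := tendsto_integral_filter_of_dominated_convergence (fun _ => (1 : ℝ))
    (hpos.mono fun n hn =>
      (hχm.comp (hK.continuous_const_smul hn).measurable).aestronglyMeasurable)
    (Eventually.of_forall fun n => Eventually.of_forall fun x => hle _)
    (integrable_const (μ := ν) 1) (Eventually.of_forall fun x => (hf x).comp hl)
  refine hdom.congr' ?_
  filter_upwards [eventually_ne_atTop 0] with n hn
  exact hν.integral_comp_natCast_rpow_smul hK hχm hχ hn

end Stable

section Exponent

variable {K : Type*} [TopologicalSpace K] [AddCommMonoid K] [SMul ℝ K] [MeasurableSpace K]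
  [BorelSpace K] {inv : K → K} {Kt : Set (K → ℂ)} {ν : Measure K}
  [IsProbabilityMeasure ν] {α : ℝ}

theorem IsStrictlyStable.ae_eq_zero_of_exponent_neg [MeasurableAdd₂ K]
    (hν : IsStrictlyStable ν α) (hK : IsCone K) (hC : ConditionC inv Kt)
    (hE : ConditionE (0 : K) Kt) (hα : α < 0) : ∀ᵐ x ∂ν, x = 0 := by
  refine hC.ae_eq_zero_of_integral_eq_one fun χ hχ => ?_
  obtain ⟨hle, h0, hadd, -⟩ := hC.1 χ hχ
  have hfix := hν.integral_eq_integral_mul_of_tendsto hK (hC.measurable hχ) hle hadd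
    (tendsto_natCast_rpow_nhdsGT_zero (one_div_neg.2 hα)) (hE.tendsto_nhdsGT_zero hK hχ h0)
  simpa using hfix.symm

open scoped Classical in
theorem ConditionC.ae_eq_ite_of_one_add_mul_eq_zero [T2Space K] [ContinuousAdd K] {o : K}
    (hC : ConditionC inv Kt) (hK : IsCone K) (ho : IsOrigin o) (ho0 : o ≠ 0)
    (hE : ConditionE o Kt) {χ : K → ℂ} (hχ : χ ∈ Kt) (hχo : χ o ≠ 1)
    (hL : 1 + ν.real {o} * (χ o - 1) = 0) : χ =ᵐ[ν] fun x => if x = o then χ o else 1 := by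
  obtain ⟨-, h0, hadd, -⟩ := hC.1 χ hχ
  by_cases hoo : o + o = o
  · have hχo0 : χ o = 0 := by
      have hsq : χ o * (χ o - 1) = 0 := by
        linear_combination (by rw [← hadd, hoo] : χ o * χ o = χ o)
      exact (mul_eq_zero.1 hsq).resolve_right (sub_ne_zero.2 hχo)
    have hνo : ν {o} = 1 := by
      rw [← ENNReal.toReal_eq_one_iff]
      exact_mod_cast (by linear_combination -hL + hχo0 * ν.real {o} : (ν.real {o} : ℂ) = 1)
    filter_upwards [(mem_ae_iff_prob_eq_one (measurableSet_singleton o)).2 hνo] with x hx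
    rw [mem_singleton_iff.1 hx, if_pos rfl]
  · have h2 : ∀ y : K, y + y = 0 := fun y => by
      by_contra hyy
      exact hoo (hK.origin_add_self ho (by rintro rfl; simp at hyy) hyy)
    refine Eventually.of_forall fun x => ?_
    by_cases hxo : x = o
    · simp [hxo]
    by_cases hx0 : x = 0
    · simp [hx0, h0, ho0.symm]
    · simpa [hxo] using hC.eq_one_of_forall_add_self_eq_zero hK hE ho0 h2 hχ hx0 hxo

theorem IsStrictlyStable.ae_eq_zero_of_exponent_pos [T2Space K] [ContinuousAdd K]
    [MeasurableAdd₂ K] {o : K} (hν : IsStrictlyStable ν α) (hK : IsCone K) (ho : IsOrigin o)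
    (ho0 : o ≠ 0) (hC : ConditionC inv Kt) (hE : ConditionE o Kt) (hα : 0 < α)
    (hproper : ∀ χ ∈ Kt, ∫ x, χ x ∂ν ≠ 0) : ∀ᵐ x ∂ν, x = 0 := by
  classical
  set p := ν.real {o}
  have hfix : ∀ χ ∈ Kt, 1 + p * (χ o - 1) = (∫ x, χ x ∂ν) * (1 + p * (χ o - 1)) := by
    intro χ hχ
    obtain ⟨hle, h0, hadd, -⟩ := hC.1 χ hχ
    have h := hν.integral_eq_integral_mul_of_tendsto hK (hC.measurable hχ) hle hadd
      ((tendsto_rpow_atTop (one_div_pos.2 hα)).comp tendsto_natCast_atTop_atTop)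
      (hE.tendsto_atTop hK ho ho0 hχ h0)
    rwa [integral_ite_eq_one_add] at h
  by_cases hp : p = 0
  · refine hC.ae_eq_zero_of_integral_eq_one fun χ hχ => ?_
    simpa [hp] using (hfix χ hχ).symm
  exfalso
  obtain ⟨χ, hχ, hχo⟩ : ∃ χ ∈ Kt, χ o ≠ 1 := by
    obtain ⟨C, hCK, -, hsep⟩ := hC.exists_countable_ne_one
    obtain ⟨χ, hχ, hne⟩ := hsep o ho0
    exact ⟨χ, hCK hχ, hne⟩
  obtain ⟨hle, -, -, -⟩ := hC.1 χ hχ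
  have hφ : ∫ x, χ x ∂ν ≠ 1 := fun h => hp <| by
    have hae := ae_eq_one_of_integral_eq_one (hC.measurable hχ).aestronglyMeasurable hle h
    have hνo : ν {o} = 0 := measure_mono_null (singleton_subset_iff.2 hχo) (ae_iff.1 hae)
    simp [p, Measure.real, hνo]
  have hL : 1 + p * (χ o - 1) = 0 := by
    have hprod : (1 + p * (χ o - 1)) * (1 - ∫ x, χ x ∂ν) = 0 := by
      linear_combination hfix χ hχ
    exact (mul_eq_zero.1 hprod).resolve_right (sub_ne_zero.2 hφ.symm)
  exact hproper χ hχ (by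
    rw [integral_congr_ae (hC.ae_eq_ite_of_one_add_mul_eq_zero hK ho ho0 hE hχ hχo hL),
      integral_ite_eq_one_add, hL])

end Exponent

theorem SaS_exponent_positive_iff_neutral_eq_origin_general
    {K : Type*} [MetricSpace K] [PolishSpace K] [AddCommMonoid K] [SMul ℝ K]
    [MeasurableSpace K] [BorelSpace K]
    (hadd_cont : Continuous fun p : K × K => p.1 + p.2)
    (hsmul_cont : ContinuousOn (fun p : ℝ × K => p.1 • p.2)
      (Set.Ioi (0 : ℝ) ×ˢ (Set.univ : Set K)))
    (hsmul_add : ∀ a : ℝ, 0 < a → ∀ x y : K, a • (x + y) = a • x + a • y)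
    (hsmul_assoc : ∀ a b : ℝ, 0 < a → 0 < b → ∀ x : K, a • (b • x) = (a * b) • x)
    (hone_smul : ∀ x : K, (1 : ℝ) • x = x)
    (hsmul_e : ∀ a : ℝ, 0 < a → a • (0 : K) = (0 : K))
    (inv : K → K)
    (o : K)
    (horigin : ∀ x : K, x ≠ 0 →
      Filter.Tendsto (fun a : ℝ => a • x) (nhdsWithin 0 (Set.Ioi 0)) (nhds o))
    (Kt : Set (K → ℂ)) (hC : ConditionC inv Kt) (hE : ConditionE o Kt)
    {Ω : Type*} [MeasurableSpace Ω] (μ : Measure Ω) [IsProbabilityMeasure μ]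
    (ξ : Ω → K) (hξmeas : Measurable ξ)
    (hnontriv : μ {ω | ξ ω = (0 : K)} < 1)
    (hproper : ∀ χ ∈ Kt, ∫ ω, χ (ξ ω) ∂μ ≠ 0)
    (α : ℝ) (hα : α ≠ 0)
    (hSaS : ∀ a b : ℝ, 0 < a → 0 < b →
      Measure.map (fun p : K × K => (a ^ (1 / α)) • p.1 + (b ^ (1 / α)) • p.2)
          ((μ.map ξ).prod (μ.map ξ)) =
        Measure.map (fun x : K => ((a + b) ^ (1 / α)) • x) (μ.map ξ)) :
    0 < α ↔ (0 : K) = o := by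
  have : ContinuousAdd K := ⟨hadd_cont⟩
  have hK : IsCone K := ⟨hsmul_cont, hsmul_add, hsmul_assoc, hone_smul, hsmul_e⟩
  set ν := μ.map ξ
  have : IsProbabilityMeasure ν := Measure.isProbabilityMeasure_map hξmeas.aemeasurable
  have hproperν : ∀ χ ∈ Kt, ∫ x, χ x ∂ν ≠ 0 := fun χ hχ => by
    rw [integral_map hξmeas.aemeasurable (hC.measurable hχ).aestronglyMeasurable]
    exact hproper χ hχ
  have hnondeg : ¬ ∀ᵐ x ∂ν, x = 0 := fun h => by
    have hν0 := (mem_ae_iff_prob_eq_one (measurableSet_singleton 0)).1 h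
    rw [Measure.map_apply hξmeas (measurableSet_singleton 0)] at hν0
    exact hnontriv.ne hν0
  constructor
  · intro hα
    by_contra hne
    exact hnondeg (IsStrictlyStable.ae_eq_zero_of_exponent_pos hSaS hK horigin (Ne.symm hne) hC hE
      hα hproperν)
  · rintro rfl
    by_contra hα_nonpos
    exact hnondeg (IsStrictlyStable.ae_eq_zero_of_exponent_neg hSaS hK hC hE
      ((not_lt.1 hα_nonpos).lt_of_ne hα))

/-- Assume Conditions (C) and (E).  Then for every proper strictly
`α`-stable random element `ξ` in `K`, the characteristic exponent `α` is positive if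
and only if the neutral element coincides with the origin (`(0 : K) = o` in Lean's
encoding, where `0` is the paper's `e` and `o` the paper's origin). -/
theorem SaS_exponent_positive_iff_neutral_eq_origin
    {K : Type*} [MetricSpace K] [PolishSpace K] [AddCommMonoid K] [SMul ℝ K]
    [MeasurableSpace K] [BorelSpace K]
    (hadd_cont : Continuous fun p : K × K => p.1 + p.2)
    (hsmul_cont : ContinuousOn (fun p : ℝ × K => p.1 • p.2)
      (Set.Ioi (0 : ℝ) ×ˢ (Set.univ : Set K)))
    (hsmul_add : ∀ a : ℝ, 0 < a → ∀ x y : K, a • (x + y) = a • x + a • y)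
    (hsmul_assoc : ∀ a b : ℝ, 0 < a → 0 < b → ∀ x : K, a • (b • x) = (a * b) • x)
    (hone_smul : ∀ x : K, (1 : ℝ) • x = x)
    (hsmul_e : ∀ a : ℝ, 0 < a → a • (0 : K) = (0 : K))
    (inv : K → K)
    (hinv_cont : Continuous inv)
    (hinv_add : ∀ x y : K, inv (x + y) = inv x + inv y)
    (hinv_invol : ∀ x : K, inv (inv x) = x)
    (hinv_smul : ∀ a : ℝ, 0 < a → ∀ x : K, inv (a • x) = a • inv x)
    (o : K)
    (horigin : ∀ x : K, x ≠ 0 →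
      Filter.Tendsto (fun a : ℝ => a • x) (nhdsWithin 0 (Set.Ioi 0)) (nhds o))
    (horigin_unique : ∀ o' : K, (∀ x : K, x ≠ 0 →
      Filter.Tendsto (fun a : ℝ => a • x) (nhdsWithin 0 (Set.Ioi 0)) (nhds o')) → o' = o)
    (Kt : Set (K → ℂ)) (hC : ConditionC inv Kt) (hE : ConditionE o Kt)
    {Ω : Type*} [MeasurableSpace Ω] (μ : Measure Ω) [IsProbabilityMeasure μ]
    (ξ : Ω → K) (hξmeas : Measurable ξ)
    (hnontriv : μ {ω | ξ ω = (0 : K)} < 1)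
    (hproper : ∀ χ ∈ Kt, ∫ ω, χ (ξ ω) ∂μ ≠ 0)
    (α : ℝ) (hα : α ≠ 0)
    (hSaS : ∀ a b : ℝ, 0 < a → 0 < b →
      Measure.map (fun p : K × K => (a ^ (1 / α)) • p.1 + (b ^ (1 / α)) • p.2)
          ((μ.map ξ).prod (μ.map ξ)) =
        Measure.map (fun x : K => ((a + b) ^ (1 / α)) • x) (μ.map ξ)) :
    0 < α ↔ (0 : K) = o :=
  SaS_exponent_positive_iff_neutral_eq_origin_general hadd_cont hsmul_cont hsmul_add hsmul_assoc
    hone_smul hsmul_e inv o horigin Kt hC hE μ ξ hξmeas hnontriv hproper α hα hSaS
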